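/- arXiv:1811.10217 — 3 statements merged into one kernel-verified Lean document; each statement's English description precedes it below -/
import Mathlib

section
/- Let 0 < ε < 1, α > 0, τ₀ = (1/(1-ε))^{1/α}, and v(τ) = sqrt((1 - ε - τ^{-α})/ε). For a finite set of points τ₀ < n₁ < n₂ < … < n_K, let g(τ) = min_{k} [ v'(n_k)(τ - n_k) + v(n_k) ] be the pointwise minimum of tangent lines, let h_∞(τ) = sqrt((1-ε)/ε) be the limiting constant, and let m(τ) = min{g(τ), h_∞(τ)}. Then for all τ ≥ τ₀, m(τ) ≥ v(τ); consequently, if u ≥ 0 and m(q) u ≤ q w holds at each break point q of m, then v(τ) u ≤ τ w for all τ ≥ τ₀. -/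
open Real

/-- Tangent line inequality for `x ↦ x ^ (-α)` (convexity). -/
lemma aux_rpow_tangent {α x n : ℝ} (hα : 0 < α) (hx : 0 < x) (hn : 0 < n) :
    n ^ (-α) - α * n ^ (-α - 1) * (x - n) ≤ x ^ (-α) := by
  set t : ℝ := x / n with ht_def
  have ht : 0 < t := div_pos hx hn
  have hkey : 1 - α * (t - 1) ≤ t ^ (-α) := by
    have h1 : Real.log t ≤ t - 1 := Real.log_le_sub_one_of_pos ht
    have h2 : -α * Real.log t + 1 ≤ Real.exp (-α * Real.log t) := Real.add_one_le_exp _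
    have haux : α * Real.log t ≤ α * (t - 1) := mul_le_mul_of_nonneg_left h1 hα.le
    rw [Real.rpow_def_of_pos ht, mul_comm (Real.log t)]
    linarith
  have hA : 0 < n ^ (-α) := Real.rpow_pos_of_pos hn _
  have hxt : x = n * t := by
    rw [ht_def]; field_simp
  have hxα : x ^ (-α) = n ^ (-α) * t ^ (-α) := by
    rw [hxt, Real.mul_rpow hn.le ht.le]
  have hmul : n ^ (-α - 1) * n = n ^ (-α) := by
    nth_rewrite 2 [← Real.rpow_one n]
    rw [← Real.rpow_add hn]; ring_nf
  have hlin : α * n ^ (-α - 1) * (x - n) = n ^ (-α) * (α * (t - 1)) := by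
    have hxnt : x - n = n * (t - 1) := by rw [hxt]; ring
    rw [hxnt, ← hmul]; ring
  rw [hxα, hlin]
  nlinarith [mul_le_mul_of_nonneg_left hkey hA.le]

/-- Tangent line inequality for `sqrt`. -/
lemma aux_sqrt_tangent {y s : ℝ} (hy : 0 ≤ y) (hs : 0 < s) :
    Real.sqrt y ≤ s + (y - s ^ 2) / (2 * s) := by
  rw [← sub_le_iff_le_add', le_div_iff₀ (by positivity)]
  nlinarith [sq_nonneg (Real.sqrt y - s), Real.sq_sqrt hy, Real.sqrt_nonneg y]

theorem stmt_16 (ε α : ℝ) (hε0 : 0 < ε) (hε1 : ε < 1) (hα : 0 < α)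
    (τ₀ : ℝ) (hτ₀ : τ₀ = (1 / (1 - ε)) ^ (1 / α))
    (v : ℝ → ℝ) (hv : ∀ τ, v τ = Real.sqrt ((1 - ε - τ ^ (-α)) / ε))
    (K : ℕ) (hK : 1 ≤ K) (n : Fin K → ℝ) (hn : ∀ k, τ₀ < n k)
    -- `g` is the pointwise minimum of the tangent lines of `v` at the points `n k`
    (g : ℝ → ℝ) (hg : ∀ τ, g τ = ⨅ k : Fin K, (deriv v (n k) * (τ - n k) + v (n k)))
    -- `m` is the pointwise minimum of `g` and the limiting constant `h_∞`
    (m : ℝ → ℝ) (hm : ∀ τ, m τ = min (g τ) (Real.sqrt ((1 - ε) / ε)))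
    -- `Q` is the set of break points of `m` (together with the left end point τ₀):
    -- between consecutive points of `Q` the function `m` is affine, and beyond the
    -- largest point of `Q` it equals the limiting constant.
    (Q : Finset ℝ) (hQne : Q.Nonempty) (hQ0 : τ₀ ∈ Q) (hQ : ∀ q ∈ Q, τ₀ ≤ q)
    (hpieces : ∀ p ∈ Q, ∀ r ∈ Q, p ≤ r → (∀ q ∈ Q, q ≤ p ∨ r ≤ q) →
      ∃ c c' : ℝ, ∀ τ ∈ Set.Icc p r, m τ = c * τ + c')
    (hlast : ∀ τ, Q.max' hQne ≤ τ → m τ = Real.sqrt ((1 - ε) / ε)) :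
    (∀ τ ∈ Set.Ici τ₀, v τ ≤ m τ) ∧
    ∀ u w : ℝ, 0 ≤ u → (∀ q ∈ Q, m q * u ≤ q * w) →
      ∀ τ ∈ Set.Ici τ₀, v τ * u ≤ τ * w := by
  have hε : 0 < 1 - ε := by linarith
  have hbase : (0:ℝ) < 1 / (1 - ε) := by positivity
  have hτ₀pos : 0 < τ₀ := by rw [hτ₀]; exact Real.rpow_pos_of_pos hbase _
  have hτ₀α : τ₀ ^ (-α) = 1 - ε := by
    rw [hτ₀, ← Real.rpow_mul hbase.le]
    rw [show (1 / α) * (-α) = -1 by field_simp]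
    rw [Real.rpow_neg_one, one_div, inv_inv]
  -- the inner function
  set f : ℝ → ℝ := fun τ => (1 - ε - τ ^ (-α)) / ε with hf_def
  have hvf : ∀ τ, v τ = Real.sqrt (f τ) := fun τ => hv τ
  have hmono : ∀ τ, τ₀ ≤ τ → τ ^ (-α) ≤ 1 - ε := by
    intro τ hτ
    rw [← hτ₀α]
    exact Real.rpow_le_rpow_of_nonpos hτ₀pos hτ (by linarith)
  have hfnonneg : ∀ τ, τ₀ ≤ τ → 0 ≤ f τ := by
    intro τ hτ
    have := hmono τ hτ
    have : 0 ≤ 1 - ε - τ ^ (-α) := by linarith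
    positivity
  have hfpos : ∀ k : Fin K, 0 < f (n k) := by
    intro k
    have h1 : (n k) ^ (-α) < τ₀ ^ (-α) :=
      Real.rpow_lt_rpow_of_neg hτ₀pos (hn k) (by linarith)
    rw [hτ₀α] at h1
    have : 0 < 1 - ε - (n k) ^ (-α) := by linarith
    positivity
  have hnkpos : ∀ k : Fin K, 0 < n k := fun k => lt_trans hτ₀pos (hn k)
  -- derivative of v at n k
  have hderiv : ∀ k : Fin K,
      HasDerivAt v ((α * (n k) ^ (-α - 1) / ε) / (2 * Real.sqrt (f (n k)))) (n k) := by
    intro k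
    have h1 : HasDerivAt (fun τ : ℝ => τ ^ (-α)) (-α * (n k) ^ (-α - 1)) (n k) :=
      Real.hasDerivAt_rpow_const (Or.inl (hnkpos k).ne')
    have h2 : HasDerivAt f (α * (n k) ^ (-α - 1) / ε) (n k) := by
      have : HasDerivAt (fun x => (1 - ε - x ^ (-α)) / ε) ((0 - -α * n k ^ (-α - 1)) / ε) (n k) :=
        ((hasDerivAt_const (n k) (1 - ε)).sub h1).div_const ε
      convert this using 1
      ring
    have h3 := h2.sqrt (hfpos k).ne'
    have : v = fun τ => Real.sqrt (f τ) := funext hvf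
    rw [this]
    exact h3
  have hderiv' : ∀ k : Fin K,
      deriv v (n k) = (α * (n k) ^ (-α - 1) / ε) / (2 * Real.sqrt (f (n k))) :=
    fun k => (hderiv k).deriv
  -- Part 1
  have part1 : ∀ τ ∈ Set.Ici τ₀, v τ ≤ m τ := by
    intro τ hτ
    rw [Set.mem_Ici] at hτ
    have hτpos : 0 < τ := lt_of_lt_of_le hτ₀pos hτ
    rw [hm, hvf]
    apply le_min
    · -- tangent lines dominate
      rw [hg]
      have : Nonempty (Fin K) := ⟨⟨0, hK⟩⟩
      apply le_ciInf
      intro k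
      have hs : 0 < Real.sqrt (f (n k)) := Real.sqrt_pos.mpr (hfpos k)
      have htan : Real.sqrt (f τ) ≤
          Real.sqrt (f (n k)) + (f τ - f (n k)) / (2 * Real.sqrt (f (n k))) := by
        have h := aux_sqrt_tangent (hfnonneg τ hτ) hs
        rwa [Real.sq_sqrt (hfpos k).le] at h
      have hfle : f τ - f (n k) ≤ α * (n k) ^ (-α - 1) / ε * (τ - n k) := by
        have h := aux_rpow_tangent hα hτpos (hnkpos k)
        have hfeq : f τ - f (n k) = ((n k) ^ (-α) - τ ^ (-α)) / ε := by
          simp only [hf_def]; ring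
        rw [hfeq, show α * (n k) ^ (-α - 1) / ε * (τ - n k)
          = (α * (n k) ^ (-α - 1) * (τ - n k)) / ε from by ring]
        gcongr
        linarith
      have hdivle : (f τ - f (n k)) / (2 * Real.sqrt (f (n k))) ≤
          (α * (n k) ^ (-α - 1) / ε) / (2 * Real.sqrt (f (n k))) * (τ - n k) := by
        rw [div_le_iff₀ (by positivity)]
        have h2s : (0:ℝ) < 2 * Real.sqrt (f (n k)) := by positivity
        calc f τ - f (n k) ≤ α * (n k) ^ (-α - 1) / ε * (τ - n k) := hfle
          _ = (α * (n k) ^ (-α - 1) / ε) / (2 * Real.sqrt (f (n k))) * (τ - n k) *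
              (2 * Real.sqrt (f (n k))) := by field_simp
      rw [hderiv' k, hvf]
      linarith
    · -- limiting constant dominates
      apply Real.sqrt_le_sqrt
      have h1 : 0 < τ ^ (-α) := Real.rpow_pos_of_pos hτpos _
      rw [div_le_div_iff₀ hε0 hε0]  -- f τ ≤ (1-ε)/ε
      nlinarith
  refine ⟨part1, ?_⟩
  -- Part 2
  intro u w hu hbp τ hτ
  have hτ' : τ₀ ≤ τ := hτ
  have hτpos : 0 < τ := lt_of_lt_of_le hτ₀pos hτ'
  have hvm : v τ * u ≤ m τ * u := mul_le_mul_of_nonneg_right (part1 τ hτ) hu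
  suffices hmw : m τ * u ≤ τ * w by linarith
  set M := Q.max' hQne with hM_def
  have hMQ : M ∈ Q := Q.max'_mem hQne
  have hMpos : 0 < M := lt_of_lt_of_le hτ₀pos (hQ M hMQ)
  by_cases hcase : M ≤ τ
  · have hmτ : m τ = Real.sqrt ((1 - ε) / ε) := hlast τ hcase
    have hmM : m M = Real.sqrt ((1 - ε) / ε) := hlast M le_rfl
    have hbM : m M * u ≤ M * w := hbp M hMQ
    have hMw : 0 ≤ M * w := by
      refine le_trans ?_ hbM
      rw [hmM]; positivity
    have hw : 0 ≤ w := by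
      by_contra h
      push_neg at h
      nlinarith [mul_pos hMpos (neg_pos.mpr h)]
    calc m τ * u = m M * u := by rw [hmτ, hmM]
      _ ≤ M * w := hbM
      _ ≤ τ * w := mul_le_mul_of_nonneg_right hcase hw
  · push_neg at hcase
    have hpne : (Q.filter (fun x => x ≤ τ)).Nonempty :=
      ⟨τ₀, Finset.mem_filter.mpr ⟨hQ0, hτ'⟩⟩
    have hrne : (Q.filter (fun x => τ ≤ x)).Nonempty :=
      ⟨M, Finset.mem_filter.mpr ⟨hMQ, hcase.le⟩⟩
    set p := (Q.filter (fun x => x ≤ τ)).max' hpne with hp_def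
    set r := (Q.filter (fun x => τ ≤ x)).min' hrne with hr_def
    have hpmem := Finset.mem_filter.mp ((Q.filter (fun x => x ≤ τ)).max'_mem hpne)
    have hrmem := Finset.mem_filter.mp ((Q.filter (fun x => τ ≤ x)).min'_mem hrne)
    obtain ⟨hpQ, hpτ⟩ := hpmem
    obtain ⟨hrQ, hτr⟩ := hrmem
    have hpr : p ≤ r := le_trans hpτ hτr
    have hsep : ∀ q ∈ Q, q ≤ p ∨ r ≤ q := by
      intro q hq
      rcases le_total q τ with h | h
      · exact Or.inl (Finset.le_max' (Q.filter (fun x => x ≤ τ)) q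
          (Finset.mem_filter.mpr ⟨hq, h⟩))
      · exact Or.inr (Finset.min'_le (Q.filter (fun x => τ ≤ x)) q
          (Finset.mem_filter.mpr ⟨hq, h⟩))
    obtain ⟨c, c', hcc⟩ := hpieces p hpQ r hrQ hpr hsep
    have hmp : m p = c * p + c' := hcc p ⟨le_rfl, hpr⟩
    have hmr : m r = c * r + c' := hcc r ⟨hpr, le_rfl⟩
    have hmτ : m τ = c * τ + c' := hcc τ ⟨hpτ, hτr⟩
    have h1 : (c * p + c') * u ≤ p * w := hmp ▸ hbp p hpQ
    have h2 : (c * r + c') * u ≤ r * w := hmr ▸ hbp r hrQ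
    rcases eq_or_lt_of_le hpr with heq | hlt
    · have hτp : τ = p := le_antisymm (heq ▸ hτr) hpτ
      rw [hmτ, hτp]
      exact h1
    · rw [hmτ]
      nlinarith [mul_le_mul_of_nonneg_left h1 (show (0:ℝ) ≤ r - τ by linarith),
        mul_le_mul_of_nonneg_left h2 (show (0:ℝ) ≤ τ - p by linarith), hlt]
end

section
/- Let v: [a, ∞) → ℝ be nondecreasing, concave, bounded above with limit L at infinity, and differentiable on (a, ∞). Fix an integer K ≥ 2 and suppose h = min_{s=1..K} h_s is a K-piece piecewise-linear outer approximation of v on [a, ∞) such that: (1) the last piece is the constant L; (2) each piece h_s is tangent to v; and (3) the gaps h(B_s) - v(B_s) are equal for all s, where B_1 = a and B_2 < … < B_K are the break points of h. Then h minimizes the error sup_{τ ≥ a}(h(τ) - v(τ)) among all K-piece piecewise-linear outer approximations of v on [a, ∞). -/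
/-!
Let `ε` be the common gap and `h_j` the `j`-th piece. The slopes of the pieces decrease, so `h_j`
is active at both `B j` and `B (j+1)`. On `[B j, B (j+1)]` the error `h - v` is then bounded by the
convex function `h_j - v`, which equals `ε` at both ends, and beyond `B (K-1)` the error is
`L - v ≤ ε`; so the error of `h` is `ε`.

Conversely, let `h'` be a `K`-piece outer approximation with error `E < ε`, and at each break point
`B p` pick a piece of `h'` active there; it lies strictly below `h`. A piece chosen at `B p` and at
a later break point would lie below `h_p` on an interval containing the tangency point of `h_p`
(which is in `(B p, B (p+1))` since `ε > 0`), where `h_p = v ≤ h'`. So the `K` chosen pieces are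
distinct, hence are all the pieces of `h'`. But `h'` is bounded above, so one of its pieces has
slope `≤ 0`; dominating `v`, it stays `≥ L`, whereas the chosen pieces are below `h ≤ L` at their
break points.
-/

open Filter Set Function

noncomputable def minAffine (K : ℕ) (d f : ℕ → ℝ) (τ : ℝ) : ℝ :=
  ⨅ s : Fin K, (d s * τ + f s)

section MinAffine

variable {K : ℕ}

lemma minAffine_le (d f : ℕ → ℝ) (τ : ℝ) {s : ℕ} (hs : s < K) :
    minAffine K d f τ ≤ d s * τ + f s :=
  ciInf_le (Finite.bddBelow_range _) (⟨s, hs⟩ : Fin K)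

lemma le_minAffine (hK : 0 < K) {d f : ℕ → ℝ} {τ y : ℝ} (h : ∀ s < K, y ≤ d s * τ + f s) :
    y ≤ minAffine K d f τ :=
  haveI : Nonempty (Fin K) := ⟨⟨0, hK⟩⟩
  le_ciInf fun s => h s s.2

lemma exists_minAffine_eq (hK : 0 < K) (d f : ℕ → ℝ) (τ : ℝ) :
    ∃ s : Fin K, minAffine K d f τ = d s * τ + f s :=
  haveI : Nonempty (Fin K) := ⟨⟨0, hK⟩⟩
  exists_eq_ciInf_of_finite.imp fun _ hs => hs.symm

lemma exists_slope_nonpos_of_eventually_minAffine_le (hK : 0 < K) {d f : ℕ → ℝ} {M : ℝ}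
    (hle : ∀ᶠ τ in atTop, minAffine K d f τ ≤ M) : ∃ s : Fin K, d s ≤ 0 := by
  by_contra! hpos
  have hlarge : ∀ᶠ τ in atTop, ∀ s : Fin K, M < d s * τ + f s := eventually_all.2 fun s =>
    (tendsto_atTop_add_const_right _ _ (tendsto_id.const_mul_atTop (hpos s))).eventually_gt_atTop M
  obtain ⟨τ, hτM, hτ⟩ := (hle.and hlarge).exists
  obtain ⟨s, hs⟩ := exists_minAffine_eq hK d f τ
  exact (hτ s).not_ge (hs ▸ hτM)

end MinAffine

lemma affine_lt_of_mem_Icc {m c m' c' x y t : ℝ} (hx : m * x + c < m' * x + c')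
    (hy : m * y + c < m' * y + c') (ht : t ∈ Icc x y) : m * t + c < m' * t + c' := by
  obtain ⟨hxt, hty⟩ := ht
  rcases le_total m m' with hm | hm <;> nlinarith

lemma exists_mem_Ico_succ_of_mem_Ico {B : ℕ → ℝ} {τ : ℝ} :
    ∀ {n : ℕ}, τ ∈ Ico (B 0) (B n) → ∃ j < n, τ ∈ Ico (B j) (B (j + 1))
  | 0, hτ => absurd hτ.1 hτ.2.not_ge
  | n + 1, hτ => by
    rcases le_or_gt (B n) τ with hτn | hτn
    · exact ⟨n, n.lt_succ_self, hτn, hτ.2⟩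
    · obtain ⟨j, hj, hτj⟩ := exists_mem_Ico_succ_of_mem_Ico ⟨hτ.1, hτn⟩
      exact ⟨j, hj.trans n.lt_succ_self, hτj⟩

lemma ConvexOn.mem_Ioo_of_lt_of_eq {s : Set ℝ} {g : ℝ → ℝ} (hg : ConvexOn ℝ s g) {x y t : ℝ}
    (hx : x ∈ s) (hy : y ∈ s) (ht : t ∈ s) (hxy : x < y) (hgy : g y = g x) (hgt : g t < g x) :
    t ∈ Ioo x y := by
  constructor
  · by_contra! htx
    rcases htx.eq_or_lt with rfl | htx
    · exact hgt.false
    · exact (hg.lt_right_of_left_lt ht hy (Ioo_subset_openSegment ⟨htx, hxy⟩) hgt).ne' hgy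
  · by_contra! hyt
    rcases hyt.eq_or_lt with rfl | hyt
    · exact hgt.ne hgy
    · exact (hg.lt_left_of_right_lt hx ht (Ioo_subset_openSegment ⟨hxy, hyt⟩) (hgy ▸ hgt)).ne hgy

section Outer

variable {v : ℝ → ℝ} {a : ℝ}

lemma ConcaveOn.convexOn_affine_sub {s : Set ℝ} (hv : ConcaveOn ℝ s v) (m c : ℝ) :
    ConvexOn ℝ s (fun τ => m * τ + c - v τ) := by
  have haff : ConvexOn ℝ s (fun τ => m * τ + c) :=
    ⟨hv.1, fun x _ y _ α β _ _ hαβ => le_of_eq <| by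
      simp only [smul_eq_mul]
      linear_combination -c * hαβ⟩
  exact haff.sub hv

lemma MonotoneOn.slope_nonneg_of_le_affine (hmono : MonotoneOn v (Ici a)) {m c : ℝ}
    (hle : ∀ τ ∈ Ici a, v τ ≤ m * τ + c) : 0 ≤ m := by
  by_contra! hm
  have hbot : Tendsto (fun τ => m * τ + c) atTop atBot :=
    tendsto_atBot_add_const_right _ c (tendsto_id.const_mul_atTop_of_neg hm)
  obtain ⟨τ, hτa, hτ⟩ := ((eventually_ge_atTop a).and (hbot.eventually_lt_atBot (v a))).exists
  linarith [hle τ hτa, hmono self_mem_Ici hτa hτa]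

lemma le_affine_of_tendsto {L m c x : ℝ} (hlim : Tendsto v atTop (nhds L)) (hm : m ≤ 0)
    (hle : ∀ τ, x ≤ τ → v τ ≤ m * τ + c) : L ≤ m * x + c :=
  le_of_tendsto hlim <| eventually_atTop.2 ⟨x, fun τ hτ => (hle τ hτ).trans (by nlinarith)⟩

end Outer

section Breaks

variable {K : ℕ} {d f B : ℕ → ℝ} {v : ℝ → ℝ} {a L ε : ℝ}

lemma slope_succ_le_of_breaks (hB : StrictMonoOn B (Iic (K - 1)))
    (hagree : ∀ j, j + 1 ≤ K - 1 → d j * B (j + 1) + f j = d (j + 1) * B (j + 1) + f (j + 1))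
    (hactive : ∀ j, j + 1 ≤ K - 1 →
      minAffine K d f (B (j + 1)) = d (j + 1) * B (j + 1) + f (j + 1))
    (hd : ∀ s < K - 1, 0 ≤ d s) (hlast : d (K - 1) = 0) {s : ℕ} (hs : s + 1 ≤ K - 1) :
    d (s + 1) ≤ d s := by
  rcases hs.eq_or_lt with hs | hs
  · rw [hs, hlast]
    exact hd s (by omega)
  · have hcross := hagree s hs.le
    have hnext : d (s + 1) * B (s + 2) + f (s + 1) ≤ d s * B (s + 2) + f s := by
      rw [hagree (s + 1) hs, ← hactive (s + 1) hs]
      exact minAffine_le d f _ (by omega)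
    have hBlt : B (s + 1) < B (s + 2) :=
      hB (mem_Iic.2 hs.le) (mem_Iic.2 hs) (by omega)
    nlinarith

lemma minAffine_eq_of_breaks (hK : 0 < K) (hB : StrictMonoOn B (Iic (K - 1)))
    (hagree : ∀ j, j + 1 ≤ K - 1 → d j * B (j + 1) + f j = d (j + 1) * B (j + 1) + f (j + 1))
    (hactive : ∀ j, j + 1 ≤ K - 1 →
      minAffine K d f (B (j + 1)) = d (j + 1) * B (j + 1) + f (j + 1))
    (hd : ∀ s < K - 1, 0 ≤ d s) (hlast : d (K - 1) = 0) :
    ∀ j ≤ K - 1, minAffine K d f (B j) = d j * B j + f j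
  | 0, _ => by
    refine le_antisymm (minAffine_le d f _ hK) (le_minAffine hK fun s hs => ?_)
    induction s with
    | zero => exact le_rfl
    | succ s ih =>
      have hslope := slope_succ_le_of_breaks hB hagree hactive hd hlast (s := s) (by omega)
      have hB0 : B 0 ≤ B (s + 1) :=
        hB.monotoneOn (mem_Iic.2 (Nat.zero_le _)) (mem_Iic.2 (by omega)) (Nat.zero_le _)
      nlinarith [ih (by omega), hagree s (by omega),
        mul_nonneg (sub_nonneg.2 hslope) (sub_nonneg.2 hB0)]
  | j + 1, hj => hactive j hj

lemma minAffine_sub_le_of_gaps (hmono : MonotoneOn v (Ici a)) (hconc : ConcaveOn ℝ (Ici a) v)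
    (hK : 0 < K) (hlast : d (K - 1) = 0 ∧ f (K - 1) = L) (hB0 : B 0 = a)
    (hBa : ∀ j ≤ K - 1, a ≤ B j)
    (hactive : ∀ j ≤ K - 1, minAffine K d f (B j) = d j * B j + f j)
    (hgap : ∀ j ≤ K - 1, minAffine K d f (B j) - v (B j) = ε)
    (hright : ∀ j, j + 1 ≤ K - 1 → d j * B (j + 1) + f j - v (B (j + 1)) = ε)
    {τ : ℝ} (hτ : τ ∈ Ici a) : minAffine K d f τ - v τ ≤ ε := by
  rcases le_or_gt (B (K - 1)) τ with hτB | hτB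
  · have hL : minAffine K d f τ ≤ L := by
      simpa [hlast] using minAffine_le d f τ (s := K - 1) (by omega)
    have hgapL : L - v (B (K - 1)) = ε := by
      simpa [hactive _ le_rfl, hlast] using hgap _ le_rfl
    linarith [hmono (hBa _ le_rfl) hτ hτB]
  · obtain ⟨j, hj, hτj⟩ := exists_mem_Ico_succ_of_mem_Ico ⟨hB0 ▸ hτ, hτB⟩
    have hjK : j + 1 ≤ K - 1 := hj
    calc minAffine K d f τ - v τ ≤ d j * τ + f j - v τ := by
          gcongr; exact minAffine_le d f τ (by omega)
      _ ≤ max (d j * B j + f j - v (B j)) (d j * B (j + 1) + f j - v (B (j + 1))) :=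
          (hconc.convexOn_affine_sub (d j) (f j)).le_max_of_mem_Icc (hBa j (by omega)) (hBa _ hjK)
            (Ico_subset_Icc_self hτj)
      _ = ε := by rw [← hactive j (by omega), hgap j (by omega), hright j hjK, max_self]

lemma exists_lt_of_lt_minAffine_at_breaks (hconc : ConcaveOn ℝ (Ici a) v)
    (htan : ∀ s < K - 1, ∃ t, a ≤ t ∧ d s * t + f s = v t)
    (hB : StrictMonoOn B (Iic (K - 1))) (hBa : ∀ j ≤ K - 1, a ≤ B j)
    (hactive : ∀ j ≤ K - 1, minAffine K d f (B j) = d j * B j + f j)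
    (hgap : ∀ j ≤ K - 1, minAffine K d f (B j) - v (B j) = ε)
    (hright : ∀ j, j + 1 ≤ K - 1 → d j * B (j + 1) + f j - v (B (j + 1)) = ε) (hε : 0 < ε)
    {p q : ℕ} (hpq : p < q) (hq : q ≤ K - 1) {m c : ℝ}
    (hltp : m * B p + c < minAffine K d f (B p)) (hltq : m * B q + c < minAffine K d f (B q)) :
    ∃ t ∈ Ici a, m * t + c < v t := by
  have hp : p + 1 ≤ K - 1 := hpq.trans_le hq
  obtain ⟨t, hta, htv⟩ := htan p hp
  have hleft : d p * B p + f p - v (B p) = ε := hactive p (by omega) ▸ hgap p (by omega)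
  have ht : t ∈ Ioo (B p) (B (p + 1)) :=
    (hconc.convexOn_affine_sub (d p) (f p)).mem_Ioo_of_lt_of_eq (hBa p (by omega)) (hBa _ hp) hta
      (hB (mem_Iic.2 (by omega)) (mem_Iic.2 hp) p.lt_succ_self)
      (by simp only [hright p hp, hleft]) (by simp only [htv, sub_self, hleft, hε])
  have hBq : B (p + 1) ≤ B q := hB.monotoneOn (mem_Iic.2 hp) (mem_Iic.2 hq) hpq
  refine ⟨t, hta, htv ▸ affine_lt_of_mem_Icc (x := B p) (y := B q) ?_ ?_
    ⟨ht.1.le, ht.2.le.trans hBq⟩⟩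
  · exact hltp.trans_eq (hactive p (by omega))
  · exact hltq.trans_le (minAffine_le d f _ (by omega))

lemma gap_le_of_minAffine_sub_le (hconc : ConcaveOn ℝ (Ici a) v)
    (hlim : Tendsto v atTop (nhds L)) (hub : ∀ τ ∈ Ici a, v τ ≤ L) (hK : 0 < K)
    (hlast : d (K - 1) = 0 ∧ f (K - 1) = L)
    (htan : ∀ s < K - 1, ∃ t, a ≤ t ∧ d s * t + f s = v t)
    (hB : StrictMonoOn B (Iic (K - 1))) (hBa : ∀ j ≤ K - 1, a ≤ B j)
    (hactive : ∀ j ≤ K - 1, minAffine K d f (B j) = d j * B j + f j)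
    (hgap : ∀ j ≤ K - 1, minAffine K d f (B j) - v (B j) = ε)
    (hright : ∀ j, j + 1 ≤ K - 1 → d j * B (j + 1) + f j - v (B (j + 1)) = ε)
    {d' f' : ℕ → ℝ} {E : ℝ} (hdom' : ∀ τ ∈ Ici a, v τ ≤ minAffine K d' f' τ)
    (hE : ∀ τ ∈ Ici a, minAffine K d' f' τ - v τ ≤ E) : ε ≤ E := by
  by_contra! hEε
  have hε : 0 < ε := by linarith [hE a self_mem_Ici, hdom' a self_mem_Ici]
  have hbelow : ∀ p : Fin K, minAffine K d' f' (B p) < minAffine K d f (B p) := fun p => by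
    linarith [hE _ (hBa p (by omega)), hgap p (by omega)]
  choose S hS using fun p : Fin K => exists_minAffine_eq hK d' f' (B p)
  have hpos : ∀ p, 0 < d' (S p) := fun p => by
    by_contra! hp
    have hL := le_affine_of_tendsto hlim hp fun τ hτ =>
      (hdom' τ ((hBa p (by omega)).trans hτ)).trans (minAffine_le d' f' τ (S p).2)
    have hhL : minAffine K d f (B p) ≤ L := by
      simpa [hlast] using minAffine_le d f (B p) (s := K - 1) (by omega)
    linarith [hbelow p, hS p]
  have hinj : Injective S := Injective.of_lt_imp_ne fun p q hpq hSpq => by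
    obtain ⟨t, hta, ht⟩ := exists_lt_of_lt_minAffine_at_breaks hconc htan hB hBa hactive hgap
      hright hε hpq (by omega) ((hS p).symm.trans_lt (hbelow p))
      (by rw [hSpq, ← hS q]; exact hbelow q)
    linarith [hdom' t hta, minAffine_le d' f' t (S p).2]
  obtain ⟨σ, hσ⟩ := exists_slope_nonpos_of_eventually_minAffine_le hK (M := L + E)
    (eventually_atTop.2 ⟨a, fun τ hτ => by linarith [hE τ hτ, hub τ hτ]⟩)
  obtain ⟨p, rfl⟩ := Finite.injective_iff_surjective.1 hinj σ
  exact (hpos p).not_ge hσ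

end Breaks

open Filter in
theorem stmt_17_general (a L : ℝ) (v : ℝ → ℝ)
    (hmono : MonotoneOn v (Set.Ici a))
    (hconc : ConcaveOn ℝ (Set.Ici a) v)
    (hlim : Tendsto v atTop (nhds L))
    (hub : ∀ τ ∈ Set.Ici a, v τ ≤ L)
    (K : ℕ) (hK : 2 ≤ K)
    (d f : ℕ → ℝ)
    (h : ℝ → ℝ) (hh : ∀ τ, h τ = ⨅ s : Fin K, (d s * τ + f s))
    (hdom : ∀ τ ∈ Set.Ici a, v τ ≤ h τ)
    -- (1) the last piece is the constant L
    (hlast : d (K - 1) = 0 ∧ f (K - 1) = L)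
    -- (2) every non-constant piece is tangent to v
    (htan : ∀ s, s < K - 1 → ∃ t, a < t ∧ HasDerivAt v (d s) t ∧ d s * t + f s = v t)
    -- B 0 = a and B 1 < … < B (K-1) are the break points of h
    (B : ℕ → ℝ) (hB0 : B 0 = a)
    (hBmono : ∀ i, i + 1 ≤ K - 1 → B i < B (i + 1))
    (hbreak : ∀ s, 1 ≤ s → s ≤ K - 1 →
      d (s - 1) * B s + f (s - 1) = d s * B s + f s ∧ h (B s) = d s * B s + f s)
    -- (3) the gaps at B 0, …, B (K-1) are all equal
    (hgap : ∀ i ≤ K - 1, ∀ j ≤ K - 1, h (B i) - v (B i) = h (B j) - v (B j)) :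
    -- h minimizes the sup error among all K-piece PWL outer approximations on [a, ∞)
    ∀ d' f' : ℕ → ℝ,
      (∀ τ ∈ Set.Ici a, v τ ≤ ⨅ s : Fin K, (d' s * τ + f' s)) →
      BddAbove ((fun τ => (⨅ s : Fin K, (d' s * τ + f' s)) - v τ) '' Set.Ici a) →
      sSup ((fun τ => h τ - v τ) '' Set.Ici a) ≤
        sSup ((fun τ => (⨅ s : Fin K, (d' s * τ + f' s)) - v τ) '' Set.Ici a) := by
  intro d' f' hdom' hbdd'
  obtain rfl : h = minAffine K d f := funext hh
  have hK0 : 0 < K := by omega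
  have hB : StrictMonoOn B (Iic (K - 1)) := strictMonoOn_Iic_of_lt_succ fun m hm => hBmono m hm
  have hBa : ∀ j ≤ K - 1, a ≤ B j := fun j hj =>
    hB0 ▸ hB.monotoneOn (mem_Iic.2 (Nat.zero_le _)) (mem_Iic.2 hj) (Nat.zero_le j)
  have hagree : ∀ j, j + 1 ≤ K - 1 → d j * B (j + 1) + f j = d (j + 1) * B (j + 1) + f (j + 1) :=
    fun j hj => by simpa using (hbreak (j + 1) (by omega) hj).1
  have hactive_succ : ∀ j, j + 1 ≤ K - 1 →
      minAffine K d f (B (j + 1)) = d (j + 1) * B (j + 1) + f (j + 1) :=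
    fun j hj => (hbreak (j + 1) (by omega) hj).2
  have hd : ∀ s < K - 1, 0 ≤ d s := fun s hs => hmono.slope_nonneg_of_le_affine fun τ hτ =>
    (hdom τ hτ).trans (minAffine_le d f τ (by omega))
  have hactive := minAffine_eq_of_breaks hK0 hB hagree hactive_succ hd hlast.1
  set ε := minAffine K d f (B 0) - v (B 0)
  have hgap' : ∀ j ≤ K - 1, minAffine K d f (B j) - v (B j) = ε :=
    fun j hj => hgap j hj 0 (Nat.zero_le _)
  have hright : ∀ j, j + 1 ≤ K - 1 → d j * B (j + 1) + f j - v (B (j + 1)) = ε := fun j hj => by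
    rw [hagree j hj, ← hactive_succ j hj]
    exact hgap' _ hj
  have hopt := gap_le_of_minAffine_sub_le hconc hlim hub hK0 hlast
    (fun s hs => (htan s hs).imp fun t ht => ⟨ht.1.le, ht.2.2⟩) hB hBa hactive hgap' hright hdom'
    fun τ hτ => le_csSup hbdd' ⟨τ, hτ, rfl⟩
  refine csSup_le (nonempty_Ici.image _) ?_
  rintro _ ⟨τ, hτ, rfl⟩
  exact (minAffine_sub_le_of_gaps hmono hconc hK0 hlast hB0 hBa hactive hgap' hright hτ).trans hopt

open Filter in
theorem stmt_17 (a L : ℝ) (v : ℝ → ℝ)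
    (hmono : MonotoneOn v (Set.Ici a))
    (hconc : ConcaveOn ℝ (Set.Ici a) v)
    (hcont : ContinuousOn v (Set.Ici a))
    (hdiff : ∀ t, a < t → DifferentiableAt ℝ v t)
    (hlim : Tendsto v atTop (nhds L))
    (hub : ∀ τ ∈ Set.Ici a, v τ ≤ L)
    (K : ℕ) (hK : 2 ≤ K)
    (d f : ℕ → ℝ)
    (h : ℝ → ℝ) (hh : ∀ τ, h τ = ⨅ s : Fin K, (d s * τ + f s))
    (hdom : ∀ τ ∈ Set.Ici a, v τ ≤ h τ)
    -- (1) the last piece is the constant L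
    (hlast : d (K - 1) = 0 ∧ f (K - 1) = L)
    -- (2) every non-constant piece is tangent to v
    (htan : ∀ s, s < K - 1 → ∃ t, a < t ∧ HasDerivAt v (d s) t ∧ d s * t + f s = v t)
    -- B 0 = a and B 1 < … < B (K-1) are the break points of h
    (B : ℕ → ℝ) (hB0 : B 0 = a)
    (hBmono : ∀ i, i + 1 ≤ K - 1 → B i < B (i + 1))
    (hbreak : ∀ s, 1 ≤ s → s ≤ K - 1 →
      d (s - 1) * B s + f (s - 1) = d s * B s + f s ∧ h (B s) = d s * B s + f s)
    -- (3) the gaps at B 0, …, B (K-1) are all equal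
    (hgap : ∀ i ≤ K - 1, ∀ j ≤ K - 1, h (B i) - v (B i) = h (B j) - v (B j)) :
    -- h minimizes the sup error among all K-piece PWL outer approximations on [a, ∞)
    ∀ d' f' : ℕ → ℝ,
      (∀ τ ∈ Set.Ici a, v τ ≤ ⨅ s : Fin K, (d' s * τ + f' s)) →
      BddAbove ((fun τ => (⨅ s : Fin K, (d' s * τ + f' s)) - v τ) '' Set.Ici a) →
      sSup ((fun τ => h τ - v τ) '' Set.Ici a) ≤
        sSup ((fun τ => (⨅ s : Fin K, (d' s * τ + f' s)) - v τ) '' Set.Ici a) :=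
  stmt_17_general a L v hmono hconc hlim hub K hK d f h hh hdom hlast htan B hB0 hBmono hbreak hgap
end

section
/- Let v: [a, b] → ℝ be continuous, strictly increasing, concave, and differentiable on (a, b). Then for every integer K ≥ 1 there exists a K-piece piecewise-linear outer approximation h = min_{s=1..K} h_s of v on [a, b] such that each piece h_s is tangent to v and the gaps h(B_s) - v(B_s) are equal at B_1 = a, all break points B_2 < … < B_K, and B_{K+1} = b. -/
/-!
For `α < β` let `chordGap v α β` be the largest height of `v` above its chord over `[α, β]`.
By the mean value theorem `v` has a tangent parallel to that chord, and concavity makes this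
tangent exactly the chord raised by `chordGap v α β`. Outside `[α, β]` the chord itself lies
above `v`, so these tangent pieces dominate `v` and exceed it by the gap at both ends of their
piece. It therefore suffices to cut `[a, b]` into `K` pieces with a common chord gap.

Such a partition is built by induction on `K`. Starting from the same point, a partition whose
pieces all have smaller gaps than those of another stays strictly behind it. Hence the common
gap `G y` of a `K`-piece partition of `[y, b]` is antitone in `y` and drops by at most the
increase of `v`, so it is continuous, and the intermediate value theorem yields a first piece
`[x, Y]` whose gap is `G Y`.
-/

open Set Filter

noncomputable def chord (v : ℝ → ℝ) (α β y : ℝ) : ℝ := v α + slope v α β * (y - α)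

noncomputable def chordGap (v : ℝ → ℝ) (α β : ℝ) : ℝ :=
  sSup ((fun y => v y - chord v α β y) '' Icc α β)

section chord

variable {v : ℝ → ℝ} {s : Set ℝ} {α β γ w y : ℝ}

@[simp]
lemma chord_left : chord v α β α = v α := by simp [chord]

@[simp]
lemma chord_right : chord v α β β = v β := by
  have := sub_smul_slope v α β
  simp only [smul_eq_mul, vsub_eq_sub] at this
  simp only [chord]
  linarith

lemma chord_comm : chord v α β = chord v β α := by
  ext y
  have := sub_smul_slope v α β
  simp only [smul_eq_mul, vsub_eq_sub] at this
  simp only [chord, slope_comm v β α]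
  linear_combination this

lemma chord_sub_chord (γ : ℝ) :
    chord v α β y - chord v α γ y = (slope v α β - slope v α γ) * (y - α) := by
  simp only [chord]; ring

namespace ConcaveOn

variable (hv : ConcaveOn ℝ s v)
include hv

lemma le_chord_of_notMem_Ioo (hα : α ∈ s) (hβ : β ∈ s) (hy : y ∈ s) (hαβ : α < β)
    (hyαβ : y ∉ Ioo α β) : v y ≤ chord v α β y := by
  have key := chord_sub_chord (v := v) (α := α) (β := β) (y := y) y
  rw [chord_right] at key
  rcases le_or_gt y α with hyα | hαy
  · rcases eq_or_lt_of_le hyα with rfl | hyα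
    · simp
    have : slope v α β ≤ slope v α y :=
      hv.slope_anti hα ⟨hy, hyα.ne⟩ ⟨hβ, hαβ.ne'⟩ (hyα.trans hαβ).le
    nlinarith
  · have hβy : β ≤ y := by
      by_contra h
      exact hyαβ ⟨hαy, not_le.mp h⟩
    have : slope v α y ≤ slope v α β :=
      hv.slope_anti hα ⟨hβ, hαβ.ne'⟩ ⟨hy, hαy.ne'⟩ hβy
    nlinarith

lemma chord_le_chord_of_le_right (hα : α ∈ s) (hβ : β ∈ s) (hαγ : α < γ) (hγβ : γ ≤ β)
    (hy : α ≤ y) : chord v α β y ≤ chord v α γ y := by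
  have hγ : γ ∈ s := hv.1.ordConnected.out hα hβ ⟨hαγ.le, hγβ⟩
  have : slope v α β ≤ slope v α γ :=
    hv.slope_anti hα ⟨hγ, hαγ.ne'⟩ ⟨hβ, (hαγ.trans_le hγβ).ne'⟩ hγβ
  have := chord_sub_chord (v := v) (α := α) (β := β) (y := y) γ
  nlinarith

lemma chord_le_chord_of_le_left (hα : α ∈ s) (hβ : β ∈ s) (hαγ : α ≤ γ) (hγβ : γ < β)
    (hy : y ≤ β) : chord v α β y ≤ chord v γ β y := by
  have hγ : γ ∈ s := hv.1.ordConnected.out hα hβ ⟨hαγ, hγβ.le⟩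
  have : slope v β γ ≤ slope v β α :=
    hv.slope_anti hβ ⟨hα, (hαγ.trans_lt hγβ).ne⟩ ⟨hγ, hγβ.ne⟩ hαγ
  have := chord_sub_chord (v := v) (α := β) (β := α) (y := y) γ
  rw [chord_comm (α := α), chord_comm (α := γ)]
  nlinarith

lemma le_tangent (hw : w ∈ s) (hy : y ∈ s) (hd : DifferentiableAt ℝ v w) :
    v y ≤ v w + deriv v w * (y - w) := by
  have hchord : chord v w y y = v y := chord_right
  simp only [chord] at hchord
  rcases lt_trichotomy y w with hyw | rfl | hwy
  · have := hv.deriv_le_slope hy hw hyw hd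
    rw [slope_comm] at this
    nlinarith
  · simp
  · have := hv.slope_le_deriv hw hy hwy hd
    nlinarith

end ConcaveOn

end chord

section chordGap

variable {v : ℝ → ℝ} {a b α α' β x y y' : ℝ}

@[simp]
lemma chordGap_self : chordGap v α α = 0 := by simp [chordGap]

lemma chordGap_le {M : ℝ} (hαβ : α ≤ β) (h : ∀ y ∈ Icc α β, v y - chord v α β y ≤ M) :
    chordGap v α β ≤ M :=
  csSup_le ((nonempty_Icc.2 hαβ).image _) (forall_mem_image.2 h)

variable (hcont : ContinuousOn v (Icc a b))
include hcont

lemma sub_chord_le_chordGap (hα : a ≤ α) (hβ : β ≤ b) (hy : y ∈ Icc α β) :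
    v y - chord v α β y ≤ chordGap v α β := by
  refine le_csSup (isCompact_Icc.bddAbove_image ?_) (mem_image_of_mem _ hy)
  exact (hcont.mono (Icc_subset_Icc hα hβ)).sub (by unfold chord; fun_prop)

lemma chordGap_nonneg (hα : a ≤ α) (hαβ : α ≤ β) (hβ : β ≤ b) : 0 ≤ chordGap v α β := by
  simpa using sub_chord_le_chordGap hcont hα hβ (left_mem_Icc.2 hαβ)

variable (hconc : ConcaveOn ℝ (Icc a b) v)
include hconc

lemma chordGap_mono {β' : ℝ} (hα : a ≤ α) (hαα' : α ≤ α') (hα'β' : α' ≤ β') (hβ'β : β' ≤ β)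
    (hβ : β ≤ b) : chordGap v α' β' ≤ chordGap v α β := by
  rcases eq_or_lt_of_le hα'β' with rfl | hα'β'
  · simpa using chordGap_nonneg hcont hα (hαα'.trans hβ'β) hβ
  have hαs : α ∈ Icc a b := ⟨hα, by linarith⟩
  have hβs : β ∈ Icc a b := ⟨by linarith, hβ⟩
  refine chordGap_le hα'β'.le fun y hy => ?_
  have h₁ := hconc.chord_le_chord_of_le_left hαs hβs hαα' (hα'β'.trans_le hβ'β) (hy.2.trans hβ'β)
  have h₂ := hconc.chord_le_chord_of_le_right (⟨by linarith, by linarith⟩ : α' ∈ Icc a b) hβs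
    hα'β' hβ'β hy.1
  have := sub_chord_le_chordGap hcont hα hβ ⟨hαα'.trans hy.1, hy.2.trans hβ'β⟩
  linarith

variable (hmono : MonotoneOn v (Icc a b))
include hmono

lemma chordGap_le_chordGap_add (hα : a ≤ α) (hαα' : α ≤ α') (hα'β : α' ≤ β) (hβ : β ≤ b) :
    chordGap v α β ≤ chordGap v α' β + (v α' - v α) := by
  have hαs : α ∈ Icc a b := ⟨hα, by linarith⟩
  have hβs : β ∈ Icc a b := ⟨by linarith, hβ⟩
  have hα's : α' ∈ Icc a b := ⟨by linarith, by linarith⟩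
  have hslope : 0 ≤ slope v α β := hmono.slope_nonneg hαs hβs
  have hgap' := chordGap_nonneg hcont (hα.trans hαα') hα'β hβ
  refine chordGap_le (hαα'.trans hα'β) fun y hy => ?_
  have hys : y ∈ Icc a b := ⟨hα.trans hy.1, hy.2.trans hβ⟩
  rcases le_or_gt y α' with hyα' | hα'y
  · have := hmono hys hα's hyα'
    have : 0 ≤ slope v α β * (y - α) := mul_nonneg hslope (by linarith [hy.1])
    simp only [chord]
    linarith
  -- both chords pass through `(β, v β)`, so on `[α', β]` they are furthest apart at `α'`
  · have hα'β : α' < β := hα'y.trans_le hy.2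
    have hanti : slope v β α' ≤ slope v β α :=
      hconc.slope_anti hβs ⟨hαs, (hαα'.trans_lt hα'β).ne⟩ ⟨hα's, hα'β.ne⟩ hαα'
    have hdiff := chord_sub_chord (v := v) (α := β) (β := α') (y := y) α
    have hα'chord := chord_sub_chord (v := v) (α := β) (β := α') (y := α') α
    rw [chord_right, ← chord_comm] at hα'chord
    rw [chord_comm (α := β), chord_comm (α := β)] at hdiff
    have := sub_chord_le_chordGap hcont (hα.trans hαα') hβ ⟨hα'y.le, hy.2⟩
    have : 0 ≤ slope v α β * (α' - α) := mul_nonneg hslope (by linarith)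
    simp only [chord] at hα'chord
    nlinarith [mul_nonneg (sub_nonneg.2 hanti) (sub_nonneg.2 hα'y.le)]

lemma chordGap_le_chordGap_add_slope_mul (hx : a ≤ x) (hxy : x ≤ y) (hyy' : y ≤ y')
    (hy' : y' ≤ b) : chordGap v x y' ≤ chordGap v x y + slope v x y' * (y' - y) := by
  have hxs : x ∈ Icc a b := ⟨hx, by linarith⟩
  have hys : y ∈ Icc a b := ⟨by linarith, by linarith⟩
  have hy's : y' ∈ Icc a b := ⟨by linarith, hy'⟩
  have hslope : 0 ≤ slope v x y' := hmono.slope_nonneg hxs hy's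
  have hgap := chordGap_nonneg hcont hx hxy (by linarith)
  have hvy : v y ≤ v y' := hmono hys hy's hyy'
  have hy'chord : chord v x y' y = v y' - slope v x y' * (y' - y) := by
    have := chord_right (v := v) (α := x) (β := y')
    simp only [chord] at this ⊢
    linarith
  refine chordGap_le (hxy.trans hyy') fun z hz => ?_
  have hzs : z ∈ Icc a b := ⟨hx.trans hz.1, hz.2.trans hy'⟩
  -- on `[x, y]` the two chords from `x` are furthest apart at `y`; beyond `y`, `v ≤ v y'`
  rcases le_or_gt z y with hzy | hyz
  · rcases eq_or_lt_of_le hxy with rfl | hxy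
    · have : z = x := le_antisymm hzy hz.1
      subst this
      simp only [chord_left, sub_self]
      positivity
    have hanti : slope v x y' ≤ slope v x y :=
      hconc.slope_anti hxs ⟨hys, hxy.ne'⟩ ⟨hy's, (hxy.trans_le hyy').ne'⟩ hyy'
    have hdiff := chord_sub_chord (v := v) (α := x) (β := y) (y := z) y'
    have := sub_chord_le_chordGap hcont hx (by linarith) ⟨hz.1, hzy⟩
    have hyy : chord v x y y = v y := chord_right
    have hdiff' := chord_sub_chord (v := v) (α := x) (β := y) (y := y) y'
    nlinarith [mul_nonneg (sub_nonneg.2 hanti) (sub_nonneg.2 hzy)]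
  · have := hmono hzs hy's hz.2
    simp only [chord] at hy'chord ⊢
    nlinarith [mul_nonneg hslope (sub_nonneg.2 hyz.le)]

end chordGap

lemma continuousWithinAt_of_abs_sub_le {f g : ℝ → ℝ} {s : Set ℝ} {y₀ : ℝ}
    (hg : ContinuousWithinAt g s y₀) (hg₀ : g y₀ = 0) (hfg : ∀ y ∈ s, |f y - f y₀| ≤ g y) :
    ContinuousWithinAt f s y₀ := by
  rw [ContinuousWithinAt, tendsto_iff_norm_sub_tendsto_zero]
  refine squeeze_zero' (Eventually.of_forall fun _ => norm_nonneg _)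
    (eventually_nhdsWithin_of_forall hfg) ?_
  rw [← hg₀]
  exact hg

lemma continuousOn_of_abs_sub_le_sub {f g : ℝ → ℝ} {s : Set ℝ} (hg : ContinuousOn g s)
    (hfg : ∀ y ∈ s, ∀ y' ∈ s, y ≤ y' → |f y - f y'| ≤ g y' - g y) : ContinuousOn f s := by
  intro y₀ hy₀
  refine continuousWithinAt_of_abs_sub_le (g := fun y => |g y - g y₀|)
    ((hg y₀ hy₀).sub continuousWithinAt_const).abs (by simp) fun y hy => ?_
  rcases le_total y y₀ with h | h
  · exact (hfg y hy y₀ hy₀ h).trans (by rw [abs_sub_comm]; exact le_abs_self _)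
  · rw [abs_sub_comm]
    exact (hfg y₀ hy₀ y hy h).trans (le_abs_self _)

section continuity

variable {v : ℝ → ℝ} {a b x : ℝ}

lemma continuousOn_chordGap (hcont : ContinuousOn v (Icc a b))
    (hconc : ConcaveOn ℝ (Icc a b) v) (hmono : MonotoneOn v (Icc a b)) (hx : a ≤ x) :
    ContinuousOn (chordGap v x) (Icc x b) := by
  intro y₀ hy₀
  have hcont' : ContinuousOn v (Icc x b) := hcont.mono (Icc_subset_Icc_left hx)
  rcases eq_or_lt_of_le hy₀.1 with rfl | hxy₀
  · refine continuousWithinAt_of_abs_sub_le ((hcont' _ hy₀).sub continuousWithinAt_const)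
      (sub_self _) fun y hy => ?_
    rw [chordGap_self, sub_zero, abs_of_nonneg (chordGap_nonneg hcont hx hy.1 hy.2)]
    simpa using chordGap_le_chordGap_add hcont hconc hmono hx hy.1 le_rfl hy.2
  have hslope : ContinuousWithinAt (slope v x) (Icc x b) y₀ := by
    rw [slope_fun_def_field]
    exact ((hcont' _ hy₀).sub continuousWithinAt_const).div
      (continuousWithinAt_id.sub continuousWithinAt_const) (sub_ne_zero.2 hxy₀.ne')
  refine continuousWithinAt_of_abs_sub_le (g := fun y => (slope v x y + slope v x y₀) * |y - y₀|)
    ((hslope.add continuousWithinAt_const).mul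
      (continuousWithinAt_id.sub continuousWithinAt_const).abs) (by simp) fun y hy => ?_
  have hxs : x ∈ Icc a b := ⟨hx, hy.1.trans hy.2⟩
  have hslope_y := hmono.slope_nonneg hxs ⟨hx.trans hy.1, hy.2⟩
  have hslope_y₀ := hmono.slope_nonneg hxs ⟨hx.trans hy₀.1, hy₀.2⟩
  rcases le_total y y₀ with h | h
  · have := chordGap_mono hcont hconc hx le_rfl hy.1 h hy₀.2
    have := chordGap_le_chordGap_add_slope_mul hcont hconc hmono hx hy.1 h hy₀.2
    rw [abs_sub_comm (chordGap v x y), abs_of_nonneg (by linarith),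
      abs_of_nonpos (sub_nonpos.2 h)]
    nlinarith [mul_nonneg hslope_y (sub_nonneg.2 h)]
  · have := chordGap_mono hcont hconc hx le_rfl hy₀.1 h hy.2
    have := chordGap_le_chordGap_add_slope_mul hcont hconc hmono hx hy₀.1 h hy.2
    rw [abs_of_nonneg (by linarith), abs_of_nonneg (by linarith)]
    nlinarith [mul_nonneg hslope_y₀ (sub_nonneg.2 h)]

end continuity

structure IsEqualGapPartition (v : ℝ → ℝ) (K : ℕ) (x b c : ℝ) (B : ℕ → ℝ) : Prop where
  zero : B 0 = x
  last : B K = b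
  lt_succ : ∀ i < K, B i < B (i + 1)
  chordGap_eq : ∀ i < K, chordGap v (B i) (B (i + 1)) = c

namespace IsEqualGapPartition

variable {v : ℝ → ℝ} {K : ℕ} {x y b c : ℝ} {B : ℕ → ℝ}

lemma strictMonoOn (hB : IsEqualGapPartition v K x b c B) : StrictMonoOn B (Iic K) :=
  strictMonoOn_Iic_of_lt_succ fun i hi => by simpa using hB.lt_succ i hi

lemma mem_Icc (hB : IsEqualGapPartition v K x b c B) {i : ℕ} (hi : i ≤ K) : B i ∈ Icc x b :=
  ⟨hB.zero ▸ hB.strictMonoOn.monotoneOn (mem_Iic.2 K.zero_le) (mem_Iic.2 hi) i.zero_le,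
    hB.last ▸ hB.strictMonoOn.monotoneOn (mem_Iic.2 hi) (mem_Iic.2 le_rfl) hi⟩

lemma cons (hB : IsEqualGapPartition v K y b c B) (hxy : x < y) (hc : chordGap v x y = c) :
    ∃ B', IsEqualGapPartition v (K + 1) x b c B' :=
  ⟨fun | 0 => x | i + 1 => B i, rfl, hB.last,
    fun | 0, _ => by simpa [hB.zero] using hxy | i + 1, hi => hB.lt_succ i (by omega),
    fun | 0, _ => by simpa [hB.zero] using hc | i + 1, hi => hB.chordGap_eq i (by omega)⟩

end IsEqualGapPartition

section comparison

variable {v : ℝ → ℝ} {a b : ℝ} (hcont : ContinuousOn v (Icc a b))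
include hcont

lemma IsEqualGapPartition.gap_nonneg {K : ℕ} {y c : ℝ} {B : ℕ → ℝ} (hK : 0 < K)
    (hB : IsEqualGapPartition v K y b c B) (hy : a ≤ y) : 0 ≤ c := by
  rw [← hB.chordGap_eq 0 hK]
  exact chordGap_nonneg hcont (hB.zero ▸ hy) (hB.lt_succ 0 hK).le (hB.mem_Icc hK).2

variable (hconc : ConcaveOn ℝ (Icc a b) v)
include hconc

/-- Inductively `D i ≤ B i`: a piece of `D` containing the matching piece of `B` would have at
least its gap. -/
lemma lt_of_forall_chordGap_lt {K : ℕ} (hK : 0 < K) {B D : ℕ → ℝ}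
    (hB : ∀ i < K, B i ≤ B (i + 1)) (hD : ∀ i ≤ K, D i ∈ Icc a b) (h₀ : D 0 ≤ B 0)
    (hgap : ∀ i < K, chordGap v (D i) (D (i + 1)) < chordGap v (B i) (B (i + 1))) :
    D K < B K := by
  have step : ∀ i < K, D i ≤ B i → D (i + 1) < B (i + 1) := fun i hi h => by
    by_contra! hle
    exact (hgap i hi).not_ge
      (chordGap_mono hcont hconc (hD i hi.le).1 h (hB i hi) hle (hD (i + 1) hi).2)
  obtain ⟨K, rfl⟩ := Nat.exists_eq_succ_of_ne_zero hK.ne'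
  suffices ∀ i ≤ K, D (i + 1) < B (i + 1) from this K le_rfl
  intro i hi
  induction i with
  | zero => exact step 0 (by omega) h₀
  | succ i ih => exact step (i + 1) (by omega) (ih (by omega)).le

lemma chordGap_max_le {α β y : ℝ} (hα : a ≤ α) (hαβ : α ≤ β) (hβ : β ≤ b) :
    chordGap v (max α y) (max β y) ≤ chordGap v α β := by
  rcases le_or_gt β y with hβy | hyβ
  · rw [max_eq_right hβy, max_eq_right (hαβ.trans hβy), chordGap_self]
    exact chordGap_nonneg hcont hα hαβ hβ
  · rw [max_eq_left hyβ.le]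
    exact chordGap_mono hcont hconc hα (le_max_left _ _) (max_le hαβ hyβ.le) le_rfl hβ

namespace IsEqualGapPartition

variable {K : ℕ} {y y' c c' : ℝ} {B B' : ℕ → ℝ}

lemma gap_anti (hK : 0 < K) (hB : IsEqualGapPartition v K y b c B)
    (hB' : IsEqualGapPartition v K y' b c' B') (hy : a ≤ y) (hyy' : y ≤ y') : c' ≤ c := by
  by_contra! h
  have hy'b : y' ≤ b := hB'.zero ▸ (hB'.mem_Icc K.zero_le).2
  -- `B` clipped at `y'` would be a partition of `[y', b]` with all gaps below `c'`
  have := lt_of_forall_chordGap_lt hcont hconc hK (B := B') (D := fun i => max (B i) y')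
    (fun i hi => (hB'.lt_succ i hi).le)
    (fun i hi => ⟨hy.trans ((hB.mem_Icc hi).1.trans (le_max_left _ _)),
      max_le (hB.mem_Icc hi).2 hy'b⟩)
    (by simp [hB.zero, hB'.zero, hyy'])
    (fun i hi => by
      rw [hB'.chordGap_eq i hi]
      refine (chordGap_max_le hcont hconc (hy.trans (hB.mem_Icc hi.le).1) (hB.lt_succ i hi).le
        (hB.mem_Icc hi).2).trans_lt ?_
      rwa [hB.chordGap_eq i hi])
  simp [hB.last, hB'.last, hy'b] at this

lemma gap_le_gap_add (hmono : MonotoneOn v (Icc a b)) (hK : 0 < K)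
    (hB : IsEqualGapPartition v K y b c B) (hB' : IsEqualGapPartition v K y' b c' B')
    (hy : a ≤ y) (hyy' : y ≤ y') : c ≤ c' + (v y' - v y) := by
  by_contra! h
  have hy'b : y' ≤ b := hB'.zero ▸ (hB'.mem_Icc K.zero_le).2
  have hΔ : 0 ≤ v y' - v y :=
    sub_nonneg.2 (hmono ⟨hy, hyy'.trans hy'b⟩ ⟨hy.trans hyy', hy'b⟩ hyy')
  -- `B'` restarted at `y` would be a partition of `[y, b]` with all gaps below `c`
  have := lt_of_forall_chordGap_lt hcont hconc hK (B := B) (D := Function.update B' 0 y)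
    (fun i hi => (hB.lt_succ i hi).le)
    (fun i hi => by
      rcases i with _ | i
      · simpa using ⟨hy, hyy'.trans hy'b⟩
      · simpa using ⟨hy.trans (hyy'.trans (hB'.mem_Icc hi).1), (hB'.mem_Icc hi).2⟩)
    (by simp [hB.zero])
    (fun i hi => by
      rw [hB.chordGap_eq i hi]
      rcases i with _ | i
      · have := chordGap_le_chordGap_add hcont hconc hmono hy (hB'.zero ▸ hyy')
          (hB'.lt_succ 0 hK).le (hB'.mem_Icc hK).2
        rw [hB'.chordGap_eq 0 hK, hB'.zero] at this
        simp only [Function.update_self, zero_add, ne_eq, one_ne_zero, not_false_eq_true,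
          Function.update_of_ne]
        linarith
      · simp only [ne_eq, Nat.add_eq_zero_iff, one_ne_zero, and_false, not_false_eq_true,
          Function.update_of_ne, hB'.chordGap_eq (i + 1) hi]
        linarith)
  simp [Function.update_of_ne hK.ne', hB.last, hB'.last] at this

lemma gap_le_sub (hmono : MonotoneOn v (Icc a b)) (hK : 0 < K)
    (hB : IsEqualGapPartition v K y b c B) (hy : a ≤ y) : c ≤ v b - v y := by
  have hB1 := hB.mem_Icc hK
  have := chordGap_le_chordGap_add hcont hconc hmono (hB.zero ▸ hy) (hB.lt_succ 0 hK).le le_rfl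
    hB1.2
  rw [hB.chordGap_eq 0 hK, zero_add, chordGap_self, hB.zero] at this
  linarith [hmono ⟨hy.trans hB1.1, hB1.2⟩ ⟨hy.trans (hB1.1.trans hB1.2), le_rfl⟩ hB1.2]

end IsEqualGapPartition

end comparison

section existence

variable {v : ℝ → ℝ} {a b : ℝ} (hcont : ContinuousOn v (Icc a b))
  (hconc : ConcaveOn ℝ (Icc a b) v) (hmono : MonotoneOn v (Icc a b))
include hcont hconc hmono

/-- No strict partition of `[b, b]` exists; `0` is the limit of `G` there. -/
lemma continuousOn_update_of_isEqualGapPartition {K : ℕ} (hK : 0 < K) {G : ℝ → ℝ}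
    {B : ℝ → ℕ → ℝ} (hGB : ∀ y ∈ Ico a b, IsEqualGapPartition v K y b (G y) (B y)) :
    ContinuousOn (Function.update G b 0) (Icc a b) := by
  refine continuousOn_of_abs_sub_le_sub hcont fun y hy y' hy' hyy' => ?_
  rcases eq_or_lt_of_le hy'.2 with rfl | hy'b
  · rcases eq_or_lt_of_le hyy' with rfl | hyy'
    · simp
    have hB := hGB y ⟨hy.1, hyy'⟩
    rw [Function.update_self, Function.update_of_ne hyy'.ne, sub_zero,
      abs_of_nonneg (hB.gap_nonneg hcont hK hy.1)]
    exact hB.gap_le_sub hcont hconc hmono hK hy.1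
  · have hB := hGB y ⟨hy.1, hyy'.trans_lt hy'b⟩
    have hB' := hGB y' ⟨hy'.1, hy'b⟩
    rw [Function.update_of_ne (hyy'.trans_lt hy'b).ne, Function.update_of_ne hy'b.ne]
    have := hB.gap_le_gap_add hcont hconc hmono hK hB' hy.1 hyy'
    have := hB.gap_anti hcont hconc hK hB' hy.1 hyy'
    have := hmono hy hy' hyy'
    rw [abs_sub_le_iff]
    constructor <;> linarith

lemma exists_chordGap_eq_of_isEqualGapPartition {K : ℕ} (hK : 0 < K) {G : ℝ → ℝ}
    {B : ℝ → ℕ → ℝ} (hGB : ∀ y ∈ Ico a b, IsEqualGapPartition v K y b (G y) (B y)) {x : ℝ}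
    (hx : x ∈ Ico a b) : ∃ y ∈ Ioo x b, chordGap v x y = G y := by
  have hB := hGB x hx
  have hB1 : B x 1 ∈ Icc x b := hB.mem_Icc hK
  have hxB1 : x < B x 1 := by simpa [hB.zero] using hB.lt_succ 0 hK
  have hGx : chordGap v x (B x 1) = G x := by simpa [hB.zero] using hB.chordGap_eq 0 hK
  rcases (hB.gap_nonneg hcont hK hx.1).eq_or_lt with hG0 | hGpos
  -- a zero gap makes `v` affine on the first piece, so any point inside it works
  · have hy : (x + B x 1) / 2 ∈ Ioo x b := ⟨by linarith, by linarith [hB1.2]⟩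
    refine ⟨_, hy, ?_⟩
    have hBy := hGB _ ⟨hx.1.trans hy.1.le, hy.2⟩
    have := chordGap_mono hcont hconc hx.1 le_rfl hy.1.le (by linarith) hB1.2
    have := chordGap_nonneg hcont hx.1 hy.1.le hy.2.le
    have := hB.gap_anti hcont hconc hK hBy hx.1 hy.1.le
    have := hBy.gap_nonneg hcont hK (hx.1.trans hy.1.le)
    linarith
  · have hφ : ContinuousOn (fun y => chordGap v x y - Function.update G b 0 y) (Icc x b) :=
      (continuousOn_chordGap hcont hconc hmono hx.1).sub
        ((continuousOn_update_of_isEqualGapPartition hcont hconc hmono hK hGB).mono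
          (Icc_subset_Icc_left hx.1))
    have hxb : chordGap v x (B x 1) ≤ chordGap v x b :=
      chordGap_mono hcont hconc hx.1 le_rfl hxB1.le hB1.2 le_rfl
    have hφ₀ : (0 : ℝ) ∈ Ioo (chordGap v x x - Function.update G b 0 x)
        (chordGap v x b - Function.update G b 0 b) := by
      rw [Function.update_of_ne hx.2.ne, Function.update_self, chordGap_self]
      constructor <;> linarith
    obtain ⟨y, hy, hφy⟩ := intermediate_value_Ioo hx.2.le hφ hφ₀
    refine ⟨y, hy, ?_⟩
    simp only [Function.update_of_ne hy.2.ne] at hφy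
    linarith

theorem exists_isEqualGapPartition {K : ℕ} (hK : 0 < K) {x : ℝ} (hx : x ∈ Ico a b) :
    ∃ c B, IsEqualGapPartition v K x b c B := by
  induction K, hK using Nat.le_induction generalizing x with
  | base =>
    have hnil : IsEqualGapPartition v 0 b b (chordGap v x b) fun _ => b :=
      ⟨rfl, rfl, fun _ h => absurd h (Nat.not_lt_zero _), fun _ h => absurd h (Nat.not_lt_zero _)⟩
    exact ⟨_, hnil.cons hx.2 rfl⟩
  | succ K hK ih =>
    choose! G B hGB using fun y (hy : y ∈ Ico a b) => ih hy
    obtain ⟨y, hy, hyG⟩ := exists_chordGap_eq_of_isEqualGapPartition hcont hconc hmono hK hGB hx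
    exact ⟨G y, (hGB y ⟨hx.1.trans hy.1.le, hy.2⟩).cons hy.1 hyG⟩

end existence

section tangent

variable {v : ℝ → ℝ} {a b α β : ℝ} (hconc : ConcaveOn ℝ (Icc a b) v)
include hconc

lemma IsEqualGapPartition.iInf_chord_add {K : ℕ} {x c : ℝ} {B : ℕ → ℝ} (hK : 0 < K)
    (hB : IsEqualGapPartition v K x b c B) (hx : a ≤ x) {j : ℕ} (hj : j ≤ K) :
    ⨅ s : Fin K, (chord v (B s) (B (s + 1)) (B j) + c) = v (B j) + c := by
  have : Nonempty (Fin K) := ⟨⟨0, hK⟩⟩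
  have hmem : ∀ i ≤ K, B i ∈ Icc a b := fun i hi =>
    ⟨hx.trans (hB.mem_Icc hi).1, (hB.mem_Icc hi).2⟩
  refine le_antisymm ?_ (le_ciInf fun s => ?_)
  · rcases hj.lt_or_eq with hjK | rfl
    · exact (ciInf_le (Finite.bddBelow_range _) ⟨j, hjK⟩).trans_eq (by simp)
    · refine (ciInf_le (Finite.bddBelow_range _) ⟨j - 1, by omega⟩).trans_eq ?_
      simp [Nat.sub_add_cancel hK]
  · have hmono := hB.strictMonoOn.monotoneOn
    have hj' : B j ∉ Ioo (B s) (B (s + 1)) := fun h => by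
      rcases le_or_gt j s with hjs | hsj
      · exact (hmono (mem_Iic.2 hj) (mem_Iic.2 s.2.le) hjs).not_gt h.1
      · exact (hmono (mem_Iic.2 s.2) (mem_Iic.2 hj) hsj).not_gt h.2
    linarith [hconc.le_chord_of_notMem_Ioo (hmem s s.2.le) (hmem (s + 1) s.2) (hmem j hj)
      (hB.lt_succ s s.2) hj']

variable (hcont : ContinuousOn v (Icc a b))
include hcont

lemma le_chord_add_chordGap (hα : a ≤ α) (hαβ : α < β) (hβ : β ≤ b) {y : ℝ}
    (hy : y ∈ Icc a b) : v y ≤ chord v α β y + chordGap v α β := by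
  by_cases hyαβ : y ∈ Ioo α β
  · linarith [sub_chord_le_chordGap hcont hα hβ (Ioo_subset_Icc_self hyαβ)]
  · linarith [hconc.le_chord_of_notMem_Ioo ⟨hα, by linarith⟩ ⟨by linarith, hβ⟩ hy hαβ hyαβ,
      chordGap_nonneg hcont hα hαβ.le hβ]

lemma tangent_eq_chord_add_chordGap (hα : a ≤ α) (hβ : β ≤ b) {w : ℝ} (hw : w ∈ Ioo α β)
    (hd : DifferentiableAt ℝ v w) (hslope : deriv v w = slope v α β) (y : ℝ) :
    deriv v w * (y - w) + v w = chord v α β y + chordGap v α β := by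
  have hws : w ∈ Icc a b := ⟨hα.trans hw.1.le, hw.2.le.trans hβ⟩
  have hgap : chordGap v α β = v w - chord v α β w := by
    refine le_antisymm (chordGap_le (hw.1.trans hw.2).le fun z hz => ?_)
      (sub_chord_le_chordGap hcont hα hβ (Ioo_subset_Icc_self hw))
    have := hconc.le_tangent hws ⟨hα.trans hz.1, hz.2.trans hβ⟩ hd
    simp only [chord, ← hslope]
    nlinarith
  rw [hgap]
  simp only [chord, hslope]
  ring

namespace IsEqualGapPartition

variable {K : ℕ} {x c : ℝ} {B : ℕ → ℝ} (hB : IsEqualGapPartition v K x b c B) (hx : a ≤ x)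
include hB hx

lemma le_chord_add {s : ℕ} (hs : s < K) {y : ℝ} (hy : y ∈ Icc a b) :
    v y ≤ chord v (B s) (B (s + 1)) y + c := by
  rw [← hB.chordGap_eq s hs]
  exact le_chord_add_chordGap hconc hcont (hx.trans (hB.mem_Icc hs.le).1) (hB.lt_succ s hs)
    (hB.mem_Icc hs).2 hy

lemma exists_tangent_eq_chord_add (hdiff : ∀ t ∈ Ioo a b, DifferentiableAt ℝ v t) {s : ℕ}
    (hs : s < K) :
    ∃ t ∈ Ioo a b, ∀ y, deriv v t * (y - t) + v t = chord v (B s) (B (s + 1)) y + c := by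
  have hα : a ≤ B s := hx.trans (hB.mem_Icc hs.le).1
  have hβ : B (s + 1) ≤ b := (hB.mem_Icc hs).2
  obtain ⟨t, ht, hslope⟩ := exists_deriv_eq_slope' v (hB.lt_succ s hs)
    (hcont.mono (Icc_subset_Icc hα hβ))
    fun z hz => (hdiff z (Ioo_subset_Ioo hα hβ hz)).differentiableWithinAt
  have htab : t ∈ Ioo a b := Ioo_subset_Ioo hα hβ ht
  refine ⟨t, htab, fun y => ?_⟩
  rw [tangent_eq_chord_add_chordGap hconc hcont hα hβ ht (hdiff t htab) hslope, hB.chordGap_eq s hs]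

end IsEqualGapPartition

end tangent

theorem stmt_18 (a b : ℝ) (hab : a < b) (v : ℝ → ℝ)
    (hcont : ContinuousOn v (Set.Icc a b))
    (hmono : StrictMonoOn v (Set.Icc a b))
    (hconc : ConcaveOn ℝ (Set.Icc a b) v)
    (hdiff : ∀ t ∈ Set.Ioo a b, DifferentiableAt ℝ v t) :
    ∀ K : ℕ, 1 ≤ K →
      ∃ (t : ℕ → ℝ) (B : ℕ → ℝ),
        -- tangency points lie in the open interval
        (∀ s, s < K → t s ∈ Set.Ioo a b) ∧
        -- end points and break points: B 0 = a < B 1 < … < B (K-1) < B K = b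
        B 0 = a ∧ B K = b ∧ (∀ i, i < K → B i < B (i + 1)) ∧
        -- each piece is the tangent line of v at t s, and their pointwise
        -- minimum h dominates v on [a, b]
        (∀ τ ∈ Set.Icc a b,
          v τ ≤ ⨅ s : Fin K, (deriv v (t s) * (τ - t s) + v (t s))) ∧
        -- consecutive pieces intersect exactly at the break points
        (∀ s, s + 1 < K →
          deriv v (t s) * (B (s + 1) - t s) + v (t s)
            = deriv v (t (s + 1)) * (B (s + 1) - t (s + 1)) + v (t (s + 1))) ∧
        -- the gaps at B 0, …, B K are all equal
        (∀ i ≤ K, ∀ j ≤ K,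
          (⨅ s : Fin K, (deriv v (t s) * (B i - t s) + v (t s))) - v (B i)
            = (⨅ s : Fin K, (deriv v (t s) * (B j - t s) + v (t s))) - v (B j)) := by
  intro K hK
  obtain ⟨c, B, hB⟩ := exists_isEqualGapPartition hcont hconc hmono.monotoneOn hK ⟨le_rfl, hab⟩
  choose! t ht hline using fun s (hs : s < K) =>
    hB.exists_tangent_eq_chord_add hconc hcont le_rfl hdiff hs
  have : Nonempty (Fin K) := ⟨⟨0, hK⟩⟩
  refine ⟨t, B, ht, hB.zero, hB.last, hB.lt_succ, fun τ hτ => le_ciInf fun s => ?_,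
    fun s hs => ?_, fun i hi j hj => ?_⟩
  · rw [hline s s.2]
    exact hB.le_chord_add hconc hcont le_rfl s.2 hτ
  · rw [hline s (by omega), hline (s + 1) hs]
    simp
  · simp only [hline _ (Fin.is_lt _), hB.iInf_chord_add hconc hK le_rfl hi,
      hB.iInf_chord_add hconc hK le_rfl hj]
    ring
end
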